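/- Let φ be any norm on ℝ^d, let Σ be a positive definite d×d real matrix with centered Gaussian measure μ_Σ, and let c > 0. Define G(x) := μ_Σ{ω ∈ ℝ^d : φ(ω + x) ≤ c}. Then for every t ∈ ℝ, μ_Σ{x ∈ ℝ^d : G(x) = t} = 0; that is, the pushforward of μ_Σ under G has no atoms. -/

import Mathlib

open MeasureTheory Matrix Filter
open scoped ENNReal

/-- Centered Gaussian density on `ℝ^d` with covariance matrix `S`:
`f_S(x) = ((2π)^d det S)^(−1/2) · exp(−(1/2) xᵀ S⁻¹ x)`. -/
noncomputable def gaussDensity {d : ℕ} (S : Matrix (Fin d) (Fin d) ℝ) (x : Fin d → ℝ) : ℝ :=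
  (Real.sqrt ((2 * Real.pi) ^ d * S.det))⁻¹ *
    Real.exp (-(1 / 2) * (x ⬝ᵥ (S⁻¹ *ᵥ x)))

/-- Centered Gaussian measure on `ℝ^d`: the measure with density `gaussDensity S`
with respect to Lebesgue measure. -/
noncomputable def gaussMeasure {d : ℕ} (S : Matrix (Fin d) (Fin d) ℝ) :
    Measure (Fin d → ℝ) :=
  volume.withDensity fun x => ENNReal.ofReal (gaussDensity S x)

/-- `φ` is a norm on `ℝ^d`: point-separating, absolutely homogeneous, subadditive. -/
structure IsNorm {d : ℕ} (φ : (Fin d → ℝ) → ℝ) : Prop where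
  eq_zero : ∀ x, φ x = 0 → x = 0
  smul : ∀ (a : ℝ) (x : Fin d → ℝ), φ (a • x) = |a| * φ x
  triangle : ∀ x y : Fin d → ℝ, φ (x + y) ≤ φ x + φ y

/-!
Along a line `x + r • e`, the Cameron–Martin formula writes `G (x + r • e)` as
`exp (-γ r² / 2)` times the moment generating function of `ω ↦ ω ⬝ᵥ Σ⁻¹ e` under `μ_Σ`
restricted to the compact set `{ω | φ (ω + x) ≤ c}`, where `γ = e ⬝ᵥ Σ⁻¹ e > 0`. This is
real-analytic in `r`, positive at `r = 0` and tends to `0` as `r → ∞`, so it is not constant and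
each level set of `G` meets the line in a discrete, hence Lebesgue-null, set. Disintegrating
Lebesgue measure along lines parallel to `e`, the level sets of `G` are Lebesgue-null, hence
`μ_Σ`-null.
-/

open Set Topology ProbabilityTheory Real

namespace IsNorm

variable {d : ℕ} {φ : (Fin d → ℝ) → ℝ}

lemma map_zero (hφ : IsNorm φ) : φ 0 = 0 := by
  simpa using hφ.smul 0 0

lemma smul_of_nonneg (hφ : IsNorm φ) {a : ℝ} (ha : 0 ≤ a) (x : Fin d → ℝ) :
    φ (a • x) = a * φ x := by
  rw [hφ.smul, abs_of_nonneg ha]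

lemma nonneg (hφ : IsNorm φ) (x : Fin d → ℝ) : 0 ≤ φ x := by
  have h := hφ.triangle x (-x)
  rw [add_neg_cancel, hφ.map_zero, ← neg_one_smul ℝ x, hφ.smul] at h
  norm_num at h
  linarith

lemma pos (hφ : IsNorm φ) {x : Fin d → ℝ} (hx : x ≠ 0) : 0 < φ x :=
  (hφ.nonneg x).lt_of_ne fun h => hx (hφ.eq_zero x h.symm)

lemma convexOn (hφ : IsNorm φ) : ConvexOn ℝ univ φ :=
  ⟨convex_univ, fun x _ y _ a b ha hb _ => by
    simpa only [hφ.smul_of_nonneg ha, hφ.smul_of_nonneg hb, smul_eq_mul]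
      using hφ.triangle (a • x) (b • y)⟩

protected lemma continuous (hφ : IsNorm φ) : Continuous φ :=
  continuousOn_univ.1 (hφ.convexOn.continuousOn isOpen_univ)

lemma exists_pos_mul_norm_le (hφ : IsNorm φ) : ∃ m > 0, ∀ x, m * ‖x‖ ≤ φ x := by
  obtain ⟨m, hm, hmin⟩ := (isCompact_sphere (0 : Fin d → ℝ) 1).exists_forall_le'
    hφ.continuous.continuousOn fun x hx => hφ.pos (ne_zero_of_mem_unit_sphere ⟨x, hx⟩)
  refine ⟨m, hm, fun x => ?_⟩
  rcases eq_or_ne x 0 with rfl | hx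
  · simp [hφ.map_zero]
  have hnx : 0 < ‖x‖ := norm_pos_iff.2 hx
  calc m * ‖x‖ ≤ φ (‖x‖⁻¹ • x) * ‖x‖ :=
        mul_le_mul_of_nonneg_right (hmin _ (by simp [norm_smul, hnx.ne'])) hnx.le
    _ = φ x := by rw [hφ.smul_of_nonneg (inv_nonneg.2 hnx.le)]; field_simp

lemma isCompact_setOf_le (hφ : IsNorm φ) (c : ℝ) : IsCompact {x | φ x ≤ c} := by
  obtain ⟨m, hm, hle⟩ := hφ.exists_pos_mul_norm_le
  refine Metric.isCompact_of_isClosed_isBounded (isClosed_le hφ.continuous continuous_const)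
    ((Metric.isBounded_closedBall (x := 0) (r := c / m)).subset fun x hx => ?_)
  rw [mem_closedBall_zero_iff, le_div_iff₀ hm, mul_comm]
  exact (hle x).trans hx

lemma isCompact_setOf_add_le (hφ : IsNorm φ) (x : Fin d → ℝ) (c : ℝ) :
    IsCompact {ω | φ (ω + x) ≤ c} :=
  (Homeomorph.addRight x).isCompact_preimage.2 (hφ.isCompact_setOf_le c)

end IsNorm

lemma AnalyticOnNhd.ae_ne {f : ℝ → ℝ} (hf : AnalyticOnNhd ℝ f univ) {t : ℝ}
    (h : ∃ r, f r ≠ t) : ∀ᵐ r, f r ≠ t := by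
  obtain ⟨r, hr⟩ := h
  have hcodiscrete := (hf.eqOn_or_eventually_ne_of_preconnected analyticOnNhd_const
    isPreconnected_univ).resolve_left fun heq => hr (heq (mem_univ r))
  have := ae_restrict_le_codiscreteWithin (μ := volume) MeasurableSet.univ hcodiscrete
  rwa [Measure.restrict_univ] at this

lemma addHaar_eq_zero_of_ae_add_smul_notMem {E : Type*} [NormedAddCommGroup E]
    [NormedSpace ℝ E] [FiniteDimensional ℝ E] [MeasurableSpace E] [BorelSpace E]
    (μ : Measure E) [μ.IsAddHaarMeasure] {A : Set E} (hA : MeasurableSet A) (e : E)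
    (h : ∀ x, ∀ᵐ r : ℝ, x + r • e ∉ A) : μ A = 0 :=
  measure_eq_zero_iff_ae_notMem.2 <|
    ae_mem_of_ae_add_linearMap_mem (LinearMap.toSpanSingleton ℝ E e) volume μ hA.compl h

section MGF

variable {α : Type*} [TopologicalSpace α] [T2Space α] [MeasurableSpace α] [OpensMeasurableSpace α]
  {μ : Measure α} [IsFiniteMeasureOnCompacts μ] {X : α → ℝ} {K : Set α}

lemma analyticOnNhd_mgf_restrict_of_isCompact (hX : Continuous X) (hK : IsCompact K) :
    AnalyticOnNhd ℝ (mgf X (μ.restrict K)) univ := by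
  have hexp : integrableExpSet X (μ.restrict K) = univ :=
    eq_univ_of_forall fun t =>
      (by fun_prop : Continuous fun x => exp (t * X x)).continuousOn.integrableOn_compact hK
  simpa [hexp] using analyticOnNhd_mgf (X := X) (μ := μ.restrict K)

lemma tendsto_exp_neg_mul_sq_mul_mgf_restrict (hX : Continuous X) (hK : IsCompact K) {γ : ℝ}
    (hγ : 0 < γ) :
    Tendsto (fun r => exp (-γ * r ^ 2) * mgf X (μ.restrict K) r) atTop (𝓝 0) := by
  obtain ⟨M, hM⟩ := hK.exists_bound_of_continuousOn hX.continuousOn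
  have : IsFiniteMeasure (μ.restrict K) := isFiniteMeasure_restrict.2 hK.measure_lt_top.ne
  have hmgf_le : ∀ r, 0 ≤ r →
      mgf X (μ.restrict K) r ≤ (μ.restrict K).real univ * exp (r * M) := by
    intro r hr
    rw [mul_comm]
    refine (le_norm_self _).trans (norm_integral_le_of_norm_le_const ?_)
    refine ae_restrict_of_forall_mem hK.measurableSet fun x hx => ?_
    rw [norm_of_nonneg (exp_pos _).le, exp_le_exp]
    exact mul_le_mul_of_nonneg_left ((le_abs_self _).trans (hM x hx)) hr
  have hexponent : Tendsto (fun r => r * M - γ * r ^ 2) atTop atBot := by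
    have := tendsto_id.atTop_mul_atBot₀
      (tendsto_atBot_add_const_left _ M (tendsto_id.const_mul_atTop_of_neg (neg_lt_zero.2 hγ)))
    refine this.congr fun r => ?_
    simp only [id]
    ring
  have hlim := (tendsto_exp_atBot.comp hexponent).const_mul ((μ.restrict K).real univ)
  rw [mul_zero] at hlim
  refine squeeze_zero' (.of_forall fun r => mul_nonneg (exp_pos _).le mgf_nonneg)
    ((eventually_ge_atTop 0).mono fun r hr => ?_) hlim
  calc exp (-γ * r ^ 2) * mgf X (μ.restrict K) r
      ≤ exp (-γ * r ^ 2) * ((μ.restrict K).real univ * exp (r * M)) :=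
        mul_le_mul_of_nonneg_left (hmgf_le r hr) (exp_pos _).le
    _ = (μ.restrict K).real univ * exp (r * M - γ * r ^ 2) := by
        rw [sub_eq_add_neg, exp_add]; ring_nf

end MGF

section Gaussian

variable {d : ℕ} {S : Matrix (Fin d) (Fin d) ℝ}

lemma continuous_gaussDensity (S : Matrix (Fin d) (Fin d) ℝ) : Continuous (gaussDensity S) := by
  unfold gaussDensity
  fun_prop

lemma gaussDensity_nonneg (S : Matrix (Fin d) (Fin d) ℝ) (x : Fin d → ℝ) :
    0 ≤ gaussDensity S x := by
  unfold gaussDensity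
  positivity

lemma gaussDensity_pos (hS : S.PosDef) (x : Fin d → ℝ) : 0 < gaussDensity S x := by
  have := hS.det_pos
  unfold gaussDensity
  positivity

lemma gaussDensity_sub (hS : S.IsSymm) (x h : Fin d → ℝ) :
    gaussDensity S (x - h)
      = gaussDensity S x * exp (x ⬝ᵥ S⁻¹ *ᵥ h - h ⬝ᵥ S⁻¹ *ᵥ h / 2) := by
  have hsymm : h ⬝ᵥ S⁻¹ *ᵥ x = x ⬝ᵥ S⁻¹ *ᵥ h := by
    rw [dotProduct_mulVec, ← mulVec_transpose, hS.inv.eq, dotProduct_comm]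
  unfold gaussDensity
  rw [mul_assoc, ← exp_add]
  simp only [mulVec_sub, dotProduct_sub, sub_dotProduct, hsymm]
  ring_nf

instance (S : Matrix (Fin d) (Fin d) ℝ) : IsLocallyFiniteMeasure (gaussMeasure S) :=
  .withDensity_ofReal (continuous_gaussDensity S)

lemma isOpenPosMeasure_gaussMeasure (hS : S.PosDef) : (gaussMeasure S).IsOpenPosMeasure :=
  (withDensity_absolutelyContinuous' (μ := volume)
    (continuous_gaussDensity S).measurable.ennreal_ofReal.aemeasurable
    (.of_forall fun x => (ENNReal.ofReal_pos.2 (gaussDensity_pos hS x)).ne')).isOpenPosMeasure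

lemma gaussMeasure_setOf_add_le_ne_zero (hS : S.PosDef) {φ : (Fin d → ℝ) → ℝ} (hφ : IsNorm φ)
    {c : ℝ} (hc : 0 < c) (x : Fin d → ℝ) : gaussMeasure S {ω | φ (ω + x) ≤ c} ≠ 0 := by
  have := isOpenPosMeasure_gaussMeasure hS
  have hopen : IsOpen {ω | φ (ω + x) < c} :=
    isOpen_lt (hφ.continuous.comp (continuous_add_const x)) continuous_const
  exact fun h0 => hopen.measure_ne_zero _ ⟨-x, by simp [hφ.map_zero, hc]⟩
    (measure_mono_null (fun ω (hω : φ (ω + x) < c) => hω.le) h0)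

/-- Cameron–Martin formula for translates of `μ_Σ`. -/
lemma gaussMeasure_preimage_add (hS : S.IsSymm) (h : Fin d → ℝ) {s : Set (Fin d → ℝ)}
    (hs : MeasurableSet s) :
    gaussMeasure S ((· + h) ⁻¹' s)
      = ∫⁻ x in s, ENNReal.ofReal (exp (x ⬝ᵥ S⁻¹ *ᵥ h - h ⬝ᵥ S⁻¹ *ᵥ h / 2)) ∂gaussMeasure S := by
  have hmeas : Measurable fun x => ENNReal.ofReal (gaussDensity S x) :=
    (continuous_gaussDensity S).measurable.ennreal_ofReal
  rw [gaussMeasure, withDensity_apply _ (measurable_add_const h hs),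
    setLIntegral_withDensity_eq_setLIntegral_mul _ hmeas (by fun_prop) hs]
  calc ∫⁻ x in (· + h) ⁻¹' s, ENNReal.ofReal (gaussDensity S x)
      = ∫⁻ x in (· + h) ⁻¹' s, ENNReal.ofReal (gaussDensity S (x + h - h)) := by
        simp only [add_sub_cancel_right]
    _ = ∫⁻ x in s, ENNReal.ofReal (gaussDensity S (x - h)) :=
        (measurePreserving_add_right volume h).setLIntegral_comp_preimage_emb
          (measurableEmbedding_addRight h) (fun y => ENNReal.ofReal (gaussDensity S (y - h))) s
    _ = _ := by
        simp only [Pi.mul_apply, gaussDensity_sub hS,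
          ENNReal.ofReal_mul (gaussDensity_nonneg S _)]

end Gaussian

section Line

variable {d : ℕ} {S : Matrix (Fin d) (Fin d) ℝ} {K : Set (Fin d → ℝ)} (e : Fin d → ℝ)

lemma gaussMeasure_preimage_add_smul_toReal (hS : S.IsSymm) (hK : MeasurableSet K) (r : ℝ) :
    (gaussMeasure S ((· + r • e) ⁻¹' K)).toReal
      = exp (-(e ⬝ᵥ S⁻¹ *ᵥ e / 2) * r ^ 2)
        * mgf (· ⬝ᵥ S⁻¹ *ᵥ e) ((gaussMeasure S).restrict K) r := by
  rw [gaussMeasure_preimage_add hS _ hK, ← integral_eq_lintegral_of_nonneg_ae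
    (.of_forall fun _ => (exp_pos _).le) (by fun_prop), mgf, ← integral_const_mul]
  congr 1 with x
  simp only [mulVec_smul, dotProduct_smul, smul_dotProduct, smul_eq_mul, ← exp_add]
  ring_nf

lemma ae_gaussMeasure_preimage_add_smul_ne (hS : S.PosDef) (he : e ≠ 0) (hK : IsCompact K)
    (hK₀ : gaussMeasure S K ≠ 0) (t : ℝ) :
    ∀ᵐ r : ℝ, (gaussMeasure S ((· + r • e) ⁻¹' K)).toReal ≠ t := by
  have hX : Continuous (· ⬝ᵥ S⁻¹ *ᵥ e) := by fun_prop
  have hγ : 0 < e ⬝ᵥ S⁻¹ *ᵥ e / 2 := half_pos (by simpa using hS.inv.dotProduct_mulVec_pos he)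
  simp_rw [gaussMeasure_preimage_add_smul_toReal e (isHermitian_iff_isSymm.1 hS.isHermitian)
    hK.measurableSet]
  have hgauss : AnalyticOnNhd ℝ (fun r : ℝ => exp (-(e ⬝ᵥ S⁻¹ *ᵥ e / 2) * r ^ 2)) univ :=
    fun r _ => by fun_prop
  refine (hgauss.mul (analyticOnNhd_mgf_restrict_of_isCompact hX hK)).ae_ne ?_
  by_contra! hconst
  have ht : t = 0 := tendsto_nhds_unique tendsto_const_nhds
    ((tendsto_exp_neg_mul_sq_mul_mgf_restrict hX hK hγ).congr hconst)
  have h0 := hconst 0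
  rw [ht, mgf_zero'] at h0
  simp [measureReal_def, ENNReal.toReal_eq_zero_iff, hK₀, hK.measure_lt_top.ne] at h0

end Line

/-- For `d ≥ 1`, a norm `φ`, positive definite `Σ`, and `c > 0`, the pushforward of `μ_Σ`
under `G(x) = μ_Σ{ω : φ(ω + x) ≤ c}` has no atoms: `μ_Σ{x : G(x) = t} = 0` for every `t`. -/
theorem gaussMeasure_shift_no_atoms (d : ℕ) (hd : 0 < d)
    (φ : (Fin d → ℝ) → ℝ) (hφ : IsNorm φ)
    (S : Matrix (Fin d) (Fin d) ℝ) (hS : S.PosDef) (c : ℝ) (hc : 0 < c) (t : ℝ) :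
    gaussMeasure S
      {x : Fin d → ℝ |
        (gaussMeasure S {ω : Fin d → ℝ | φ (ω + x) ≤ c}).toReal = t} = 0 := by
  have : Nonempty (Fin d) := ⟨⟨0, hd⟩⟩
  obtain ⟨e, he⟩ := exists_ne (0 : Fin d → ℝ)
  have hG : Measurable fun x => (gaussMeasure S {ω | φ (ω + x) ≤ c}).toReal :=
    (measurable_measure_add_right (gaussMeasure S)
      (hφ.isCompact_setOf_le c).measurableSet).ennreal_toReal
  refine withDensity_absolutelyContinuous _ _ <| addHaar_eq_zero_of_ae_add_smul_notMem volume
    (hG (measurableSet_singleton t)) e fun x => ?_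
  have hshift : ∀ r : ℝ,
      {ω | φ (ω + (x + r • e)) ≤ c} = (· + r • e) ⁻¹' {ω | φ (ω + x) ≤ c} := by
    intro r
    ext ω
    change φ _ ≤ c ↔ φ _ ≤ c
    rw [add_assoc, add_comm x]
  simpa [hshift] using ae_gaussMeasure_preimage_add_smul_ne e hS he
    (hφ.isCompact_setOf_add_le x c) (gaussMeasure_setOf_add_le_ne_zero hS hφ hc x) t
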